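/- arXiv:1701.04188 — 5 statements merged into one kernel-verified Lean document; each statement's English description precedes it below -/
import Mathlib

section
/- Let G = (V,E) be a graph with a root v₀ ∈ V. Put L₀ = {v₀} and recursively L_k = { v ∈ V \ (L₀ ∪ … ∪ L_{k−1}) : there exists w ∈ L_{k−1} with w a neighbor of v }, for k ∈ ℕ₊. If the map k ↦ |L_k| grows faster than any polynomial function of degree N (i.e., |L_k| / k^N → ∞ as k → ∞), then there is no mixing embedding of G in Z^N. -/
open MeasureTheory ProbabilityTheory Filter
open scoped ENNReal NNReal

noncomputable section

/-- The supremum (ℓ∞) distance `d_{∞,ℤ^N}` on the lattice `ℤ^N`, with values in `ℕ`. -/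
def distZ {N : ℕ} (x y : Fin N → ℤ) : ℕ :=
  Finset.univ.sup fun i => (x i - y i).natAbs

/-- A graph `G` with node set `V` has a *mixing embedding* in `ℤ^N` if `G` is isomorphic to a
graph `G'` with node set `V' ⊆ ℤ^N` (i.e. there is an injection `φ : V → ℤ^N`, the graph
structure of `G'` being the one transported along `φ`) such that for every sequence of pairs
`((vᵢ, wᵢ) : i ∈ ℕ)` of nodes, boundedness of the graph distances `d_G(vᵢ, wᵢ)` implies
boundedness of the sup-distances `d_{∞,ℤ^N}(φ vᵢ, φ wᵢ)` of the images. -/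
def MixingEmbedding {V : Type*} (G : SimpleGraph V) (N : ℕ) : Prop :=
  ∃ φ : V → (Fin N → ℤ), Function.Injective φ ∧
    ∀ vw : ℕ → V × V,
      (∃ M : ℕ, ∀ i, G.edist (vw i).1 (vw i).2 ≤ (M : ℕ∞)) →
      (∃ M' : ℕ, ∀ i, distZ (φ (vw i).1) (φ (vw i).2) ≤ M')

/-- The α-mixing coefficient of a real-valued random field `Z` indexed by `V`, with respect to
an extended-ℕ-valued distance `ed` on the index set `V` and a measure `μ`:
`α(n)` is the supremum over index sets `I, J ⊆ V` with `d(I,J) ≥ n` of the supremum over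
`A ∈ σ(Z_v : v ∈ I)`, `B ∈ σ(Z_w : w ∈ J)` of `|μ(A ∩ B) − μ(A)·μ(B)|`. -/
def alphaMix {Ω : Type*} [MeasurableSpace Ω] (μ : Measure Ω) {V : Type*}
    (ed : V → V → ℕ∞) (Z : V → Ω → ℝ) (n : ℕ) : ℝ :=
  ⨆ I : Set V, ⨆ J : Set V, ⨆ (_ : ∀ v ∈ I, ∀ w ∈ J, (n : ℕ∞) ≤ ed v w),
  ⨆ A : Set Ω, ⨆ (_ : MeasurableSet[⨆ v ∈ I, MeasurableSpace.comap (Z v) inferInstance] A),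
  ⨆ B : Set Ω, ⨆ (_ : MeasurableSet[⨆ w ∈ J, MeasurableSpace.comap (Z w) inferInstance] B),
    |(μ (A ∩ B)).toReal - (μ A).toReal * (μ B).toReal|

/-- The nodes of the tree growing at an exponential rate `A`:
`V = {(j,k) : j ∈ ℕ, 1 ≤ k ≤ A^j}`. -/
def TreeNode (A : ℕ) : Type := {p : ℕ × ℕ // 1 ≤ p.2 ∧ p.2 ≤ A ^ p.1}

/-- The tree growing at an exponential rate `A`: the node `(j,k)` is joined to its children
`(j+1, A(k-1)+1), …, (j+1, Ak)`. -/
def expTree (A : ℕ) : SimpleGraph (TreeNode A) where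
  Adj v w := (w.1.1 = v.1.1 + 1 ∧ A * (v.1.2 - 1) + 1 ≤ w.1.2 ∧ w.1.2 ≤ A * v.1.2)
    ∨ (v.1.1 = w.1.1 + 1 ∧ A * (w.1.2 - 1) + 1 ≤ v.1.2 ∧ v.1.2 ≤ A * w.1.2)
  symm := ⟨fun v w h => Or.symm h⟩
  loopless := ⟨fun v h => by rcases h with ⟨h, -⟩ | ⟨h, -⟩ <;> omega⟩

/-- `V(j,k,P)`: the node set of the subtree of the tree growing at exponential rate `A`
rooted at the node `(j,k)` and consisting of `P` generations. -/
def subtreeNodes (A j k P : ℕ) : Set (TreeNode A) :=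
  {v | j ≤ v.1.1 ∧ v.1.1 ≤ j + P - 1 ∧
    A ^ (v.1.1 - j) * (k - 1) + 1 ≤ v.1.2 ∧ v.1.2 ≤ A ^ (v.1.1 - j) * k}

/-- `N(P,L)`: the combinatorial sum
`Σ_{h=0}^{⌊P−1−L/2⌋} A^h Σ_{i=max(1,L−(P−1−h))}^{min(L,P−1−h)} A^i (2·1{L=i} + (A−1)A^{L−i−1}·1{L>i})`.
(Here `⌊P−1−L/2⌋ = P−1−⌈L/2⌉` and `⌈L/2⌉ = (L+1)/2` in natural-number division.) -/
def npairs (A P L : ℕ) : ℕ :=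
  ∑ h ∈ Finset.range (P - 1 - (L + 1) / 2 + 1),
    A ^ h * ∑ i ∈ Finset.Icc (max 1 (L - (P - 1 - h))) (min L (P - 1 - h)),
      A ^ i * (2 * (if L = i then 1 else 0) + (A - 1) * A ^ (L - i - 1) * (if i < L then 1 else 0))

end

/-- The layers of a rooted graph: `L₀ = {v₀}` and
`L_k = {v ∈ V \ (L₀ ∪ … ∪ L_{k−1}) : ∃ w ∈ L_{k−1}, w is a neighbour of v}`. -/
def layer {V : Type*} (G : SimpleGraph V) (v₀ : V) : ℕ → Set V
  | 0 => {v₀}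
  | k + 1 => {v | (∀ i, i ≤ k → v ∉ layer G v₀ i) ∧ ∃ w ∈ layer G v₀ k, G.Adj v w}

/-! Applied to sequences of adjacent pairs, the mixing property bounds the lattice distance
between the images of neighbours by a constant `C`. The injection then maps the layer `L_k`
into the sup-ball of radius `C k` around the image of the root, which has
`(2Ck + 1)^N ≤ ((2C + 1) k)^N` points, so `|L_k| / k^N` stays bounded. -/

section distZ

variable {N : ℕ}

lemma distZ_le_iff {x y : Fin N → ℤ} {r : ℕ} : distZ x y ≤ r ↔ ∀ i, (x i - y i).natAbs ≤ r :=
  Finset.sup_le_iff.trans (by simp)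

lemma distZ_triangle (x y z : Fin N → ℤ) : distZ x z ≤ distZ x y + distZ y z :=
  distZ_le_iff.2 fun i =>
    calc (x i - z i).natAbs = ((x i - y i) + (y i - z i)).natAbs := by ring_nf
      _ ≤ (x i - y i).natAbs + (y i - z i).natAbs := Int.natAbs_add_le _ _
      _ ≤ distZ x y + distZ y z :=
        add_le_add (distZ_le_iff.1 le_rfl i) (distZ_le_iff.1 le_rfl i)

lemma setOf_distZ_le_eq_Icc (c : Fin N → ℤ) (r : ℕ) :
    {x | distZ x c ≤ r} = ↑(Finset.Icc (fun i => c i - r) (fun i => c i + r)) := by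
  ext x
  simp only [Set.mem_ofPred_eq, distZ_le_iff, Finset.coe_Icc, Set.mem_Icc, Pi.le_def,
    ← forall_and]
  exact forall_congr' fun i => by omega

lemma ncard_setOf_distZ_le (c : Fin N → ℤ) (r : ℕ) :
    {x | distZ x c ≤ r}.ncard = (2 * r + 1) ^ N := by
  have hwidth : ∀ i, (c i + r + 1 - (c i - r)).toNat = 2 * r + 1 := fun i => by omega
  rw [setOf_distZ_le_eq_Icc, Set.ncard_coe_finset, Pi.card_Icc]
  simp [hwidth]

lemma ncard_le_of_forall_distZ_le {V : Type*} {s : Set V} {φ : V → Fin N → ℤ}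
    (hφ : Set.InjOn φ s) (c : Fin N → ℤ) {r : ℕ} (hs : ∀ v ∈ s, distZ (φ v) c ≤ r) :
    s.ncard ≤ (2 * r + 1) ^ N := by
  rw [← hφ.ncard_image, ← ncard_setOf_distZ_le c r]
  refine Set.ncard_le_ncard (Set.image_subset_iff.2 hs) ?_
  rw [setOf_distZ_le_eq_Icc]
  exact Finset.finite_toSet _

end distZ

section layer

variable {V : Type*} {G : SimpleGraph V} {N : ℕ}

lemma exists_distZ_le_of_adj {φ : V → Fin N → ℤ}
    (hφ : ∀ vw : ℕ → V × V, (∃ M : ℕ, ∀ i, G.edist (vw i).1 (vw i).2 ≤ (M : ℕ∞)) →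
      ∃ M' : ℕ, ∀ i, distZ (φ (vw i).1) (φ (vw i).2) ≤ M') :
    ∃ C : ℕ, ∀ v w, G.Adj v w → distZ (φ v) (φ w) ≤ C := by
  by_contra! h
  choose v w hadj hfar using h
  obtain ⟨M, hM⟩ := hφ (fun i => (v i, w i))
    ⟨1, fun i => by simpa using SimpleGraph.edist_le (hadj i).toWalk⟩
  exact (hfar M).not_ge (hM M)

lemma distZ_le_of_mem_layer {φ : V → Fin N → ℤ} {C : ℕ}
    (hC : ∀ v w, G.Adj v w → distZ (φ v) (φ w) ≤ C) {v₀ : V} :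
    ∀ {k : ℕ}, ∀ v ∈ layer G v₀ k, distZ (φ v) (φ v₀) ≤ C * k
  | 0, v, hv => by
    rw [layer, Set.mem_singleton_iff] at hv
    simp [hv, distZ]
  | k + 1, v, hv => by
    rw [layer] at hv
    obtain ⟨-, w, hw, hadj⟩ := hv
    calc distZ (φ v) (φ v₀) ≤ distZ (φ v) (φ w) + distZ (φ w) (φ v₀) := distZ_triangle _ _ _
      _ ≤ C + C * k := add_le_add (hC v w hadj) (distZ_le_of_mem_layer hC w hw)
      _ = C * (k + 1) := by ring

end layer

lemma not_tendsto_div_pow_atTop_of_le {f : ℕ → ℕ} {A N : ℕ}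
    (hf : ∀ᶠ k in atTop, f k ≤ A * k ^ N) :
    ¬ Tendsto (fun k : ℕ => (f k : ℝ) / (k : ℝ) ^ N) atTop atTop := by
  intro h
  obtain ⟨k, hlarge, hfk, hk⟩ :=
    ((h.eventually_gt_atTop (A : ℝ)).and (hf.and (eventually_ge_atTop 1))).exists
  have hkN : (0 : ℝ) < (k : ℝ) ^ N := by positivity
  rw [lt_div_iff₀ hkN] at hlarge
  exact hlarge.not_ge (by exact_mod_cast hfk)

theorem stmt2_general {V : Type*} (G : SimpleGraph V) (v₀ : V) (N : ℕ)
    (hgrow : Tendsto (fun k : ℕ => (Nat.card (layer G v₀ k) : ℝ) / (k : ℝ) ^ N)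
      atTop atTop) :
    ¬ MixingEmbedding G N := by
  rintro ⟨φ, hinj, hmix⟩
  obtain ⟨C, hC⟩ := exists_distZ_le_of_adj hmix
  refine not_tendsto_div_pow_atTop_of_le (A := (2 * C + 1) ^ N) ?_ hgrow
  filter_upwards [eventually_ge_atTop 1] with k hk
  calc Nat.card (layer G v₀ k) = (layer G v₀ k).ncard := Nat.card_coe_set_eq _
    _ ≤ (2 * (C * k) + 1) ^ N :=
      ncard_le_of_forall_distZ_le hinj.injOn (φ v₀) (distZ_le_of_mem_layer hC)
    _ ≤ ((2 * C + 1) * k) ^ N := Nat.pow_le_pow_left (by nlinarith) N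
    _ = (2 * C + 1) ^ N * k ^ N := mul_pow _ _ _

/-- **Proposition (no mixing embedding under super-polynomial layer growth).**
If the layer sizes `|L_k|` of a rooted graph `G` grow faster than any polynomial of degree `N`
(i.e. `|L_k|/k^N → ∞`), then there is no mixing embedding of `G` in `ℤ^N`. -/
theorem stmt2 {V : Type*} (G : SimpleGraph V) (v₀ : V) (N : ℕ)
    (hfin : ∀ k, (layer G v₀ k).Finite)
    (hgrow : Tendsto (fun k : ℕ => (Nat.card (layer G v₀ k) : ℝ) / (k : ℝ) ^ N)
      atTop atTop) :
    ¬ MixingEmbedding G N :=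
  stmt2_general G v₀ N hgrow
end

section
/- Let T = (V,E) be the tree growing at exponential rate A, let (j,k) ∈ V, P ∈ ℕ₊, and consider the subgraph of T induced by the node set V(j,k,P). Then for every L with 1 ≤ L ≤ 2(P−1), the number of ordered pairs (v,w) ∈ V(j,k,P) × V(j,k,P) with d_T(v,w) = L equals N(P,L) = Σ_{h=0}^{⌊P−1−L/2⌋} A^h · Σ_{i = max(1, L−(P−1−h))}^{min(L, P−1−h)} A^i · ( 2·1{L = i} + (A−1)·A^{L−i−1}·1{L > i} ). -/
open MeasureTheory ProbabilityTheory Filter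
open scoped ENNReal NNReal

/-!
Encode a node of `V(j,k,P)` by its generation `d < P` below `(j,k)` and its position `e < A ^ d`
in that generation. The distance of two nodes is `d₁ + d₂ - 2h`, where `h` is the depth of their
lowest common ancestor, the largest `m` with `e₁ / A ^ (d₁ - m) = e₂ / A ^ (d₂ - m)`: walking up
to that ancestor and down again gives `≤`, and `d₁ + d₂ - 2h` changes by at most one along an edge,
which gives `≥`. For fixed `e₁`, the positions `e₂` sharing the ancestor of `e₁` at depth `m` form
a block of `A ^ (d₂ - m)` consecutive integers, so the pairs whose lowest common ancestor has depth
exactly `h` are counted by the difference of two such blocks. Parametrising `d₁ = h + i`,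
`d₂ = h + (L - i)` and summing over `h` and `i` gives `N(P,L)`.
-/

open Finset

theorem Finset.card_filter_product {α β : Type*} (s : Finset α) (t : Finset β) (p : α × β → Prop)
    [DecidablePred p] : #{x ∈ s ×ˢ t | p x} = ∑ a ∈ s, #{b ∈ t | p (a, b)} := by
  rw [card_filter, sum_product]
  simp only [card_filter]

theorem Nat.card_filter_range_mul_div_eq {n q c : ℕ} (hq : 0 < q) (hc : c < n) :
    #{e ∈ range (n * q) | e / q = c} = q := by
  have hcn : c * q + q ≤ n * q := by rw [← Nat.succ_mul]; exact Nat.mul_le_mul_right q hc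
  have hblock : {e ∈ range (n * q) | e / q = c} = Ico (c * q) (c * q + q) := by
    ext e
    simp only [mem_filter, mem_range, mem_Ico, Nat.div_eq_iff hq]
    omega
  rw [hblock, Nat.card_Ico, Nat.add_sub_cancel_left]

namespace ExpTree

open SimpleGraph

/-- A node is encoded by its depth `d` and its position `e < A ^ d` in that generation, counted
from `0`; its ancestor at depth `m ≤ d` has position `e / A ^ (d - m)`. -/
def SameAncestor (A d₁ e₁ d₂ e₂ m : ℕ) : Prop := e₁ / A ^ (d₁ - m) = e₂ / A ^ (d₂ - m)

instance (A d₁ e₁ d₂ e₂ m : ℕ) : Decidable (SameAncestor A d₁ e₁ d₂ e₂ m) :=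
  inferInstanceAs (Decidable (_ = _))

def lcaDepth (A d₁ e₁ d₂ e₂ : ℕ) : ℕ :=
  Nat.findGreatest (SameAncestor A d₁ e₁ d₂ e₂) (min d₁ d₂)

section Positions

variable {A d₁ e₁ d₂ e₂ m : ℕ}

lemma sameAncestor_zero (h₁ : e₁ < A ^ d₁) (h₂ : e₂ < A ^ d₂) : SameAncestor A d₁ e₁ d₂ e₂ 0 := by
  simp [SameAncestor, Nat.div_eq_of_lt h₁, Nat.div_eq_of_lt h₂]

lemma SameAncestor.mono {m' : ℕ} (h : SameAncestor A d₁ e₁ d₂ e₂ m) (hm' : m' ≤ m)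
    (h₁ : m ≤ d₁) (h₂ : m ≤ d₂) : SameAncestor A d₁ e₁ d₂ e₂ m' := by
  have p₁ : A ^ (d₁ - m') = A ^ (d₁ - m) * A ^ (m - m') := by rw [← pow_add]; congr 1; omega
  have p₂ : A ^ (d₂ - m') = A ^ (d₂ - m) * A ^ (m - m') := by rw [← pow_add]; congr 1; omega
  rw [SameAncestor, p₁, p₂, ← Nat.div_div_eq_div_mul, ← Nat.div_div_eq_div_mul, h]

lemma sameAncestor_succ_iff (hm : m ≤ d₁) :
    SameAncestor A (d₁ + 1) e₁ d₂ e₂ m ↔ SameAncestor A d₁ (e₁ / A) d₂ e₂ m := by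
  rw [SameAncestor, SameAncestor, Nat.div_div_eq_div_mul, ← pow_succ', Nat.sub_add_comm hm]

lemma lcaDepth_le : lcaDepth A d₁ e₁ d₂ e₂ ≤ min d₁ d₂ := Nat.findGreatest_le _

lemma le_lcaDepth_iff (h₁ : e₁ < A ^ d₁) (h₂ : e₂ < A ^ d₂) :
    m ≤ lcaDepth A d₁ e₁ d₂ e₂ ↔ m ≤ min d₁ d₂ ∧ SameAncestor A d₁ e₁ d₂ e₂ m := by
  refine ⟨fun hm => ⟨hm.trans lcaDepth_le, ?_⟩, fun ⟨hm, h⟩ => Nat.le_findGreatest hm h⟩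
  have hle : lcaDepth A d₁ e₁ d₂ e₂ ≤ min d₁ d₂ := lcaDepth_le
  have hspec : SameAncestor A d₁ e₁ d₂ e₂ (lcaDepth A d₁ e₁ d₂ e₂) :=
    Nat.findGreatest_spec (Nat.zero_le _) (sameAncestor_zero h₁ h₂)
  exact hspec.mono hm (by omega) (by omega)

end Positions

section Distance

variable {A : ℕ}

def offset (v : TreeNode A) : ℕ := v.1.2 - 1

lemma offset_lt (v : TreeNode A) : offset v < A ^ v.1.1 := by
  have := v.2; unfold offset; omega

def ancestor (m : ℕ) (v : TreeNode A) : TreeNode A :=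
  ⟨(min m v.1.1, offset v / A ^ (v.1.1 - m) + 1), Nat.le_add_left _ _,
    Nat.div_lt_of_lt_mul <| by
      rw [← pow_add]; convert offset_lt v using 2; dsimp only; omega⟩

lemma depth_ancestor (m : ℕ) (v : TreeNode A) : (ancestor m v).1.1 = min m v.1.1 := rfl

lemma offset_ancestor (m : ℕ) (v : TreeNode A) :
    offset (ancestor m v) = offset v / A ^ (v.1.1 - m) := rfl

lemma ancestor_of_le {m : ℕ} {v : TreeNode A} (h : v.1.1 ≤ m) : ancestor m v = v := by
  apply Subtype.ext
  show (min m v.1.1, offset v / A ^ (v.1.1 - m) + 1) = (v.1.1, v.1.2)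
  rw [Nat.sub_eq_zero_of_le h, pow_zero, Nat.div_one, min_eq_right h, offset,
    Nat.sub_add_cancel v.2.1]

lemma ancestor_ancestor {m m' : ℕ} (h : m ≤ m') (v : TreeNode A) :
    ancestor m (ancestor m' v) = ancestor m v := by
  apply Subtype.ext
  have hexp : v.1.1 - m' + (min m' v.1.1 - m) = v.1.1 - m := by omega
  show (min m (min m' v.1.1), offset v / A ^ (v.1.1 - m') / A ^ (min m' v.1.1 - m) + 1) =
    (min m v.1.1, offset v / A ^ (v.1.1 - m) + 1)
  rw [Nat.div_div_eq_div_mul, ← pow_add, hexp]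
  congr 1
  omega

lemma ancestor_eq_ancestor {m : ℕ} {v w : TreeNode A} (hm : m ≤ min v.1.1 w.1.1)
    (h : SameAncestor A v.1.1 (offset v) w.1.1 (offset w) m) : ancestor m v = ancestor m w := by
  apply Subtype.ext
  show (min m v.1.1, offset v / A ^ (v.1.1 - m) + 1) = (min m w.1.1, offset w / A ^ (w.1.1 - m) + 1)
  rw [show offset v / A ^ (v.1.1 - m) = _ from h]
  congr 1
  omega

lemma adj_iff (hA : 1 ≤ A) {v w : TreeNode A} :
    (expTree A).Adj v w ↔
      (w.1.1 = v.1.1 + 1 ∧ offset w / A = offset v) ∨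
        (v.1.1 = w.1.1 + 1 ∧ offset v / A = offset w) := by
  have hv := v.2; have hw := w.2
  have child_iff : ∀ a b : ℕ, 1 ≤ a → 1 ≤ b →
      (A * (a - 1) + 1 ≤ b ∧ b ≤ A * a ↔ (b - 1) / A = a - 1) := by
    intro a b ha hb
    have : A * a = A * (a - 1) + A := by rw [← Nat.mul_succ]; congr 1; omega
    rw [Nat.div_eq_iff (by omega), Nat.mul_comm (a - 1)]
    omega
  simp only [expTree, offset, child_iff _ _ hv.1 hw.1, child_iff _ _ hw.1 hv.1]

lemma adj_ancestor_pred (hA : 1 ≤ A) {v : TreeNode A} (h : 1 ≤ v.1.1) :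
    (expTree A).Adj v (ancestor (v.1.1 - 1) v) := by
  rw [adj_iff hA, depth_ancestor, offset_ancestor]
  right
  exact ⟨by omega, by rw [show v.1.1 - (v.1.1 - 1) = 1 by omega, pow_one]⟩

lemma exists_walk_ancestor (hA : 1 ≤ A) (m : ℕ) :
    ∀ n (v : TreeNode A), v.1.1 - m = n →
      ∃ p : (expTree A).Walk v (ancestor m v), p.length = n
  | 0, v, h => ⟨Walk.nil.copy rfl (ancestor_of_le (by omega)).symm, by simp⟩
  | n + 1, v, h => by
    obtain ⟨p, hp⟩ := exists_walk_ancestor hA m n (ancestor (v.1.1 - 1) v)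
      (by rw [depth_ancestor]; omega)
    exact ⟨.cons (adj_ancestor_pred hA (by omega)) (p.copy rfl (ancestor_ancestor (by omega) v)),
      by simp [hp]⟩

def nodeLcaDepth (v w : TreeNode A) : ℕ := lcaDepth A v.1.1 (offset v) w.1.1 (offset w)

def treeDist (v w : TreeNode A) : ℕ := v.1.1 + w.1.1 - 2 * nodeLcaDepth v w

lemma nodeLcaDepth_le (v w : TreeNode A) : nodeLcaDepth v w ≤ min v.1.1 w.1.1 := lcaDepth_le

lemma le_nodeLcaDepth_iff {m : ℕ} {v w : TreeNode A} :
    m ≤ nodeLcaDepth v w ↔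
      m ≤ min v.1.1 w.1.1 ∧ SameAncestor A v.1.1 (offset v) w.1.1 (offset w) m :=
  le_lcaDepth_iff (offset_lt v) (offset_lt w)

lemma nodeLcaDepth_self (v : TreeNode A) : nodeLcaDepth v v = v.1.1 :=
  le_antisymm ((nodeLcaDepth_le v v).trans (min_le_left _ _)) (le_nodeLcaDepth_iff.2 ⟨by simp, rfl⟩)

lemma nodeLcaDepth_of_parent {u v : TreeNode A} (hd : v.1.1 = u.1.1 + 1)
    (ho : offset v / A = offset u) (w : TreeNode A) : nodeLcaDepth u w = min (nodeLcaDepth v w) u.1.1 := by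
  refine eq_of_forall_le_iff fun m => ?_
  rw [le_min_iff, le_nodeLcaDepth_iff, le_nodeLcaDepth_iff, hd]
  constructor
  · rintro ⟨hm, h⟩
    exact ⟨⟨by omega, (sameAncestor_succ_iff (by omega)).2 (ho ▸ h)⟩, by omega⟩
  · rintro ⟨⟨hm, h⟩, hmu⟩
    exact ⟨by omega, ho ▸ (sameAncestor_succ_iff hmu).1 h⟩

lemma edist_le_treeDist (hA : 1 ≤ A) (v w : TreeNode A) :
    (expTree A).edist v w ≤ treeDist v w := by
  have hs := nodeLcaDepth_le v w
  obtain ⟨p, hp⟩ := exists_walk_ancestor hA (nodeLcaDepth v w) _ v rfl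
  obtain ⟨q, hq⟩ := exists_walk_ancestor hA (nodeLcaDepth v w) _ w rfl
  have hpq : ancestor (nodeLcaDepth v w) v = ancestor (nodeLcaDepth v w) w :=
    ancestor_eq_ancestor hs (le_nodeLcaDepth_iff.1 le_rfl).2
  calc (expTree A).edist v w ≤ (p.append (q.copy rfl hpq.symm).reverse).length := edist_le _
    _ = treeDist v w := by
      simp only [Walk.length_append, Walk.length_reverse, Walk.length_copy, hp, hq, treeDist]
      norm_cast
      omega

lemma treeDist_le_of_adj (hA : 1 ≤ A) {v u : TreeNode A} (hvu : (expTree A).Adj v u)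
    (w : TreeNode A) : treeDist v w ≤ treeDist u w + 1 := by
  have hv := nodeLcaDepth_le v w
  have hu := nodeLcaDepth_le u w
  unfold treeDist
  rcases (adj_iff hA).1 hvu with ⟨hd, ho⟩ | ⟨hd, ho⟩
  · have := nodeLcaDepth_of_parent hd ho w
    omega
  · have := nodeLcaDepth_of_parent hd ho w
    omega

lemma treeDist_le_length (hA : 1 ≤ A) {v w : TreeNode A} (p : (expTree A).Walk v w) :
    treeDist v w ≤ p.length := by
  induction p with
  | nil => simp only [treeDist, nodeLcaDepth_self]; omega
  | cons h _ ih =>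
    rw [Walk.length_cons]
    exact (treeDist_le_of_adj hA h _).trans (by omega)

theorem edist_eq_treeDist (hA : 1 ≤ A) (v w : TreeNode A) :
    (expTree A).edist v w = treeDist v w := by
  refine le_antisymm (edist_le_treeDist hA v w) ?_
  rw [edist_eq_sInf]
  exact le_sInf <| Set.forall_mem_range.2 fun p => by exact_mod_cast treeDist_le_length hA p

end Distance

section Subtree

variable {A j k P : ℕ}

lemma pow_mul_add_lt {c d e : ℕ} (hc : c < A ^ j) (he : e < A ^ d) :
    A ^ d * c + e < A ^ (j + d) :=
  calc A ^ d * c + e < A ^ d * (c + 1) := by rw [mul_add_one]; omega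
    _ ≤ A ^ d * A ^ j := Nat.mul_le_mul_left _ hc
    _ = A ^ (j + d) := by rw [← pow_add, add_comm]

lemma sameAncestor_shift (hA : 1 ≤ A) {c d₁ e₁ d₂ e₂ m : ℕ} (hm₁ : m ≤ d₁) (hm₂ : m ≤ d₂) :
    SameAncestor A (j + d₁) (A ^ d₁ * c + e₁) (j + d₂) (A ^ d₂ * c + e₂) (j + m) ↔
      SameAncestor A d₁ e₁ d₂ e₂ m := by
  have split : ∀ d, m ≤ d → A ^ d * c = A ^ (d - m) * (A ^ m * c) := fun d hd => by
    rw [← mul_assoc, ← pow_add, Nat.sub_add_cancel hd]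
  rw [SameAncestor, SameAncestor, Nat.add_sub_add_left, Nat.add_sub_add_left, split d₁ hm₁,
    split d₂ hm₂, Nat.mul_add_div (Nat.pow_pos hA),
    Nat.mul_add_div (Nat.pow_pos hA), Nat.add_left_cancel_iff]

lemma lcaDepth_shift (hA : 1 ≤ A) {c d₁ e₁ d₂ e₂ : ℕ} (hc : c < A ^ j) (h₁ : e₁ < A ^ d₁)
    (h₂ : e₂ < A ^ d₂) :
    lcaDepth A (j + d₁) (A ^ d₁ * c + e₁) (j + d₂) (A ^ d₂ * c + e₂) =
      j + lcaDepth A d₁ e₁ d₂ e₂ := by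
  have shifted : ∀ m, j + m ≤ lcaDepth A (j + d₁) (A ^ d₁ * c + e₁) (j + d₂) (A ^ d₂ * c + e₂) ↔
      m ≤ lcaDepth A d₁ e₁ d₂ e₂ := fun m => by
    rw [le_lcaDepth_iff (pow_mul_add_lt hc h₁) (pow_mul_add_lt hc h₂), le_lcaDepth_iff h₁ h₂]
    constructor
    · rintro ⟨hm, h⟩
      exact ⟨by omega, (sameAncestor_shift hA (by omega) (by omega)).1 h⟩
    · rintro ⟨hm, h⟩
      exact ⟨by omega, (sameAncestor_shift hA (by omega) (by omega)).2 h⟩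
  have hj := (shifted 0).2 (Nat.zero_le _)
  refine le_antisymm ?_ ((shifted _).2 le_rfl)
  have := (shifted (lcaDepth A (j + d₁) (A ^ d₁ * c + e₁) (j + d₂) (A ^ d₂ * c + e₂) - j)).1
    (by omega)
  omega

lemma eq_of_depth_offset {v w : TreeNode A} (hd : v.1.1 = w.1.1) (ho : offset v = offset w) :
    v = w := by
  have := v.2; have := w.2
  unfold offset at ho
  exact Subtype.ext (Prod.ext hd (by omega))

def relCoords (j k : ℕ) (v : TreeNode A) : ℕ × ℕ :=
  (v.1.1 - j, offset v - A ^ (v.1.1 - j) * (k - 1))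

lemma relCoords_eq {v : TreeNode A} {d e : ℕ}
    (hv : v.1.1 = j + d ∧ offset v = A ^ d * (k - 1) + e) : relCoords j k v = (d, e) := by
  rw [relCoords, hv.1, hv.2, Nat.add_sub_cancel_left, Nat.add_sub_cancel_left]

lemma exists_node_of_relCoords (hk : 1 ≤ k) (hkA : k ≤ A ^ j) {d e : ℕ} (he : e < A ^ d) :
    ∃ v : TreeNode A, v.1.1 = j + d ∧ offset v = A ^ d * (k - 1) + e :=
  ⟨⟨(j + d, A ^ d * (k - 1) + e + 1), Nat.le_add_left _ _, pow_mul_add_lt (by omega) he⟩, rfl, rfl⟩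

lemma mem_subtreeNodes_iff (hk : 1 ≤ k) (hP : 1 ≤ P) {v : TreeNode A} :
    v ∈ subtreeNodes A j k P ↔
      ∃ d < P, ∃ e < A ^ d, v.1.1 = j + d ∧ offset v = A ^ d * (k - 1) + e := by
  have := v.2
  have hsucc : ∀ d, A ^ d * k = A ^ d * (k - 1) + A ^ d := fun d => by
    rw [← mul_add_one, Nat.sub_add_cancel hk]
  simp only [subtreeNodes, Set.mem_ofPred_eq, offset]
  constructor
  · rintro ⟨h₁, h₂, h₃, h₄⟩
    have := hsucc (v.1.1 - j)
    exact ⟨v.1.1 - j, by omega, v.1.2 - 1 - A ^ (v.1.1 - j) * (k - 1), by omega, by omega, by omega⟩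
  · rintro ⟨d, hd, e, he, h₁, h₂⟩
    have := hsucc d
    rw [show v.1.1 - j = d by omega]
    omega

lemma edist_eq_of_relCoords (hA : 1 ≤ A) (hkA : k ≤ A ^ j) {v w : TreeNode A}
    {d₁ e₁ d₂ e₂ : ℕ} (h₁ : e₁ < A ^ d₁) (h₂ : e₂ < A ^ d₂)
    (hv : v.1.1 = j + d₁ ∧ offset v = A ^ d₁ * (k - 1) + e₁)
    (hw : w.1.1 = j + d₂ ∧ offset w = A ^ d₂ * (k - 1) + e₂) :
    (expTree A).edist v w = (d₁ + d₂ - 2 * lcaDepth A d₁ e₁ d₂ e₂ : ℕ) := by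
  have hc : k - 1 < A ^ j := by have := Nat.one_le_pow j A hA; omega
  rw [edist_eq_treeDist hA, treeDist, nodeLcaDepth, hv.1, hv.2, hw.1, hw.2,
    lcaDepth_shift hA hc h₁ h₂]
  congr 1
  omega

end Subtree

section Counting

variable {A d₁ e₁ d₂ m : ℕ}

lemma card_sameAncestor (hA : 1 ≤ A) (hm₁ : m ≤ d₁) (hm₂ : m ≤ d₂) (he₁ : e₁ < A ^ d₁) :
    #{e₂ ∈ range (A ^ d₂) | SameAncestor A d₁ e₁ d₂ e₂ m} = A ^ (d₂ - m) := by
  have split : ∀ d, m ≤ d → A ^ d = A ^ m * A ^ (d - m) := fun d hd => by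
    rw [← pow_add, Nat.add_sub_cancel' hd]
  have hc : e₁ / A ^ (d₁ - m) < A ^ m :=
    Nat.div_lt_of_lt_mul (by rwa [mul_comm, ← split d₁ hm₁])
  simp only [SameAncestor, eq_comm (a := e₁ / _)]
  rw [split d₂ hm₂]
  exact Nat.card_filter_range_mul_div_eq (Nat.pow_pos hA) hc

lemma card_le_lcaDepth (hA : 1 ≤ A) (hm : m ≤ min d₁ d₂) (he₁ : e₁ < A ^ d₁) :
    #{e₂ ∈ range (A ^ d₂) | m ≤ lcaDepth A d₁ e₁ d₂ e₂} = A ^ (d₂ - m) := by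
  rw [← card_sameAncestor hA (by omega) (by omega) he₁]
  congr 1
  refine filter_congr fun e₂ he₂ => ?_
  rw [le_lcaDepth_iff he₁ (mem_range.1 he₂), and_iff_right hm]

lemma card_lcaDepth_eq (hA : 1 ≤ A) {h : ℕ} (hh : h ≤ min d₁ d₂) (he₁ : e₁ < A ^ d₁) :
    #{e₂ ∈ range (A ^ d₂) | lcaDepth A d₁ e₁ d₂ e₂ = h} =
      if h = min d₁ d₂ then A ^ (d₂ - h) else (A - 1) * A ^ (d₂ - h - 1) := by
  have hsplit : {e₂ ∈ range (A ^ d₂) | lcaDepth A d₁ e₁ d₂ e₂ = h} =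
      {e₂ ∈ range (A ^ d₂) | h ≤ lcaDepth A d₁ e₁ d₂ e₂} \
        {e₂ ∈ range (A ^ d₂) | h + 1 ≤ lcaDepth A d₁ e₁ d₂ e₂} := by
    ext
    simp only [mem_filter, Finset.mem_sdiff, mem_range]
    omega
  rw [hsplit, card_sdiff_of_subset (monotone_filter_right _ fun _ _ => by omega),
    card_le_lcaDepth hA hh he₁]
  split_ifs with hmin
  · have hempty : {e₂ ∈ range (A ^ d₂) | h + 1 ≤ lcaDepth A d₁ e₁ d₂ e₂} = ∅ :=
      filter_eq_empty_iff.2 fun e₂ _ => by have := @lcaDepth_le A d₁ e₁ d₂ e₂; omega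
    rw [hempty, card_empty, Nat.sub_zero]
  · rw [card_le_lcaDepth hA (by omega) he₁, show d₂ - (h + 1) = d₂ - h - 1 by omega,
      Nat.sub_one_mul, ← pow_succ', Nat.sub_add_cancel (by omega : 1 ≤ d₂ - h)]

lemma card_pairs_lcaDepth_eq (hA : 1 ≤ A) {h : ℕ} (hh : h ≤ min d₁ d₂) :
    #{e ∈ range (A ^ d₁) ×ˢ range (A ^ d₂) | lcaDepth A d₁ e.1 d₂ e.2 = h} =
      A ^ d₁ * if h = min d₁ d₂ then A ^ (d₂ - h) else (A - 1) * A ^ (d₂ - h - 1) := by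
  rw [card_filter_product, sum_congr rfl fun e₁ he₁ => card_lcaDepth_eq hA hh (mem_range.1 he₁),
    sum_const, card_range, smul_eq_mul]

lemma card_pairs_at_dist_eq (hA : 1 ≤ A) {L h i : ℕ} (hi : i ≤ L) :
    #{e ∈ range (A ^ (h + i)) ×ˢ range (A ^ (h + (L - i))) |
        h + i + (h + (L - i)) - 2 * lcaDepth A (h + i) e.1 (h + (L - i)) e.2 = L} =
      A ^ (h + i) * if i = 0 ∨ i = L then A ^ (L - i) else (A - 1) * A ^ (L - i - 1) := by
  have hlca : ∀ e : ℕ × ℕ,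
      h + i + (h + (L - i)) - 2 * lcaDepth A (h + i) e.1 (h + (L - i)) e.2 = L ↔
        lcaDepth A (h + i) e.1 (h + (L - i)) e.2 = h := fun e => by
    have := @lcaDepth_le A (h + i) e.1 (h + (L - i)) e.2
    omega
  simp only [hlca]
  rw [card_pairs_lcaDepth_eq hA (by omega), Nat.add_sub_cancel_left]
  by_cases hend : i = 0 ∨ i = L
  · rw [if_pos (by omega), if_pos hend]
  · rw [if_neg (by omega), if_neg hend]

end Counting

section Reindexing

/-- Pairs of depths `(d₁, d₂) = (h + i, h + (L - i))` below the root of a `P`-generation subtree: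
`h` is the depth of the lowest common ancestor, `i ≤ L` the distance from it to the first node. -/
def depthPairs (P L : ℕ) : Finset (Σ _ : ℕ, ℕ) :=
  (range (P - 1 - (L + 1) / 2 + 1)).sigma fun h => Icc (L - (P - 1 - h)) (min L (P - 1 - h))

lemma sum_range_product_eq_sum_depthPairs {P : ℕ} (hP : 1 ≤ P) (L : ℕ) (g : ℕ × ℕ → ℕ)
    (hg : ∀ d₁ d₂, g (d₁, d₂) ≠ 0 → ∃ h ≤ min d₁ d₂, d₁ + d₂ = L + 2 * h) :
    ∑ d ∈ range P ×ˢ range P, g d = ∑ x ∈ depthPairs P L, g (x.1 + x.2, x.1 + (L - x.2)) := by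
  have hinj : Set.InjOn (fun x : Σ _ : ℕ, ℕ => (x.1 + x.2, x.1 + (L - x.2))) (depthPairs P L) := by
    rintro ⟨h, i⟩ hx ⟨h', i'⟩ hx' heq
    simp only [mem_coe, depthPairs, mem_sigma, mem_range, mem_Icc, Prod.mk.injEq] at hx hx' heq
    obtain rfl : h = h' := by omega
    obtain rfl : i = i' := by omega
    rfl
  rw [← sum_image hinj]
  refine (sum_subset (fun d hd => ?_) fun d _ hnot => ?_).symm
  · obtain ⟨x, hx, rfl⟩ := mem_image.1 hd
    simp only [depthPairs, mem_sigma, mem_range, mem_Icc] at hx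
    simp only [mem_product, mem_range]
    omega
  · by_contra hne
    obtain ⟨h, hh, hsum⟩ := hg d.1 d.2 hne
    refine hnot (mem_image.2 ⟨⟨h, d.1 - h⟩, ?_, Prod.ext (by dsimp only; omega)
      (by dsimp only; omega)⟩)
    simp only [depthPairs, mem_sigma, mem_range, mem_Icc]
    have := mem_product.1 ‹d ∈ range P ×ˢ range P›
    simp only [mem_range] at this
    omega

lemma sum_depthPairs_eq_npairs (A P L : ℕ) (hL : 1 ≤ L) :
    ∑ x ∈ depthPairs P L,
      A ^ (x.1 + x.2) * (if x.2 = 0 ∨ x.2 = L then A ^ (L - x.2) else (A - 1) * A ^ (L - x.2 - 1)) =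
        npairs A P L := by
  set F : ℕ → ℕ := fun i => A ^ i * if i = 0 ∨ i = L then A ^ (L - i) else (A - 1) * A ^ (L - i - 1)
  -- the summand of `npairs` counts the pairs with `i = 0` together with those with `i = L`
  have hG : ∀ i ∈ Icc 1 L, A ^ i * (2 * (if L = i then 1 else 0) +
      (A - 1) * A ^ (L - i - 1) * (if i < L then 1 else 0)) = F i + if i = L then A ^ L else 0 := by
    intro i hi
    rw [mem_Icc] at hi
    rcases hi.2.lt_or_eq with hlt | rfl
    · simp [F, hlt, hlt.ne, hlt.ne', show i ≠ 0 by omega]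
    · simp only [F, ↓reduceIte, lt_self_iff_false, tsub_self, zero_tsub, pow_zero, mul_one,
        mul_zero, add_zero, or_true]
      ring
  rw [depthPairs, sum_sigma, npairs]
  refine sum_congr rfl fun h _ => ?_
  have hpow : ∀ i,
      A ^ (h + i) * (if i = 0 ∨ i = L then A ^ (L - i) else (A - 1) * A ^ (L - i - 1)) =
        A ^ h * F i := fun i => by rw [pow_add, mul_assoc]
  simp only [hpow, ← mul_sum]
  congr 1
  by_cases hfull : L ≤ P - 1 - h
  · rw [show L - (P - 1 - h) = 0 by omega, show min L (P - 1 - h) = L by omega,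
      max_eq_left (Nat.zero_le 1),
      ← add_sum_Ioc_eq_sum_Icc (Nat.zero_le L), ← zero_add 1, Icc_add_one_left_eq_Ioc,
      sum_congr rfl (fun i hi => hG i (by rw [← Icc_add_one_left_eq_Ioc] at hi; exact hi)),
      sum_add_distrib, sum_ite_eq', if_pos (mem_Ioc.2 ⟨by omega, le_rfl⟩)]
    simp only [F, true_or, ↓reduceIte, pow_zero, tsub_zero, one_mul]
    ring
  · rw [max_eq_right (by omega), min_eq_right (by omega)]
    refine sum_congr rfl fun i hi => ?_
    rw [hG i (by simp only [mem_Icc] at hi ⊢; omega), if_neg (by simp only [mem_Icc] at hi; omega),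
      add_zero]

end Reindexing

lemma natCard_pairs_at_dist_eq_sum {A j k P : ℕ} (hA : 1 ≤ A) (hk : 1 ≤ k) (hkA : k ≤ A ^ j)
    (hP : 1 ≤ P) (L : ℕ) :
    Nat.card {p : TreeNode A × TreeNode A //
        p.1 ∈ subtreeNodes A j k P ∧ p.2 ∈ subtreeNodes A j k P ∧
        (expTree A).edist p.1 p.2 = (L : ℕ∞)} =
      ∑ d ∈ range P ×ˢ range P, #{e ∈ range (A ^ d.1) ×ˢ range (A ^ d.2) |
        d.1 + d.2 - 2 * lcaDepth A d.1 e.1 d.2 e.2 = L} := by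
  rw [← card_sigma, ← Set.ncard_coe_finset]
  refine (Nat.card_coe_set_eq _).trans (Set.ncard_congr (fun p _ =>
    ⟨((relCoords j k p.1).1, (relCoords j k p.2).1),
      ((relCoords j k p.1).2, (relCoords j k p.2).2)⟩)
    ?_ ?_ ?_)
  · rintro ⟨v, w⟩ ⟨hv, hw, hvw⟩
    obtain ⟨d₁, hd₁, e₁, he₁, hv⟩ := (mem_subtreeNodes_iff hk hP).1 hv
    obtain ⟨d₂, hd₂, e₂, he₂, hw⟩ := (mem_subtreeNodes_iff hk hP).1 hw
    rw [edist_eq_of_relCoords hA hkA he₁ he₂ hv hw, Nat.cast_inj] at hvw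
    simp only [relCoords_eq hv, relCoords_eq hw, mem_coe, mem_sigma, mem_filter, mem_product,
      mem_range]
    exact ⟨⟨hd₁, hd₂⟩, ⟨he₁, he₂⟩, hvw⟩
  · rintro ⟨v, w⟩ ⟨v', w'⟩ ⟨hv, hw, -⟩ ⟨hv', hw', -⟩ heq
    obtain ⟨d₁, -, e₁, -, hv⟩ := (mem_subtreeNodes_iff hk hP).1 hv
    obtain ⟨d₂, -, e₂, -, hw⟩ := (mem_subtreeNodes_iff hk hP).1 hw
    obtain ⟨d₁', -, e₁', -, hv'⟩ := (mem_subtreeNodes_iff hk hP).1 hv'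
    obtain ⟨d₂', -, e₂', -, hw'⟩ := (mem_subtreeNodes_iff hk hP).1 hw'
    simp only [relCoords_eq hv, relCoords_eq hw, relCoords_eq hv', relCoords_eq hw',
      Sigma.mk.injEq, Prod.mk.injEq, heq_eq_eq] at heq
    obtain ⟨⟨rfl, rfl⟩, rfl, rfl⟩ := heq
    exact Prod.ext (eq_of_depth_offset (hv.1.trans hv'.1.symm) (hv.2.trans hv'.2.symm))
      (eq_of_depth_offset (hw.1.trans hw'.1.symm) (hw.2.trans hw'.2.symm))
  · rintro ⟨⟨d₁, d₂⟩, e₁, e₂⟩ hx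
    simp only [mem_coe, mem_sigma, mem_filter, mem_product, mem_range] at hx
    obtain ⟨⟨hd₁, hd₂⟩, ⟨he₁, he₂⟩, hdist⟩ := hx
    obtain ⟨v, hv⟩ := exists_node_of_relCoords hk hkA he₁
    obtain ⟨w, hw⟩ := exists_node_of_relCoords hk hkA he₂
    refine ⟨(v, w), ⟨(mem_subtreeNodes_iff hk hP).2 ⟨d₁, hd₁, e₁, he₁, hv⟩,
      (mem_subtreeNodes_iff hk hP).2 ⟨d₂, hd₂, e₂, he₂, hw⟩, ?_⟩, ?_⟩
    · rw [edist_eq_of_relCoords hA hkA he₁ he₂ hv hw, hdist]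
    · simp only [relCoords_eq hv, relCoords_eq hw]

end ExpTree

open ExpTree

theorem stmt5_general (A : ℕ) (hA : 1 ≤ A) (j k P : ℕ) (hk1 : 1 ≤ k) (hkA : k ≤ A ^ j)
    (hP : 1 ≤ P) (L : ℕ) (hL1 : 1 ≤ L) :
    Nat.card {p : TreeNode A × TreeNode A //
        p.1 ∈ subtreeNodes A j k P ∧ p.2 ∈ subtreeNodes A j k P ∧
        (expTree A).edist p.1 p.2 = (L : ℕ∞)} = npairs A P L := by
  rw [natCard_pairs_at_dist_eq_sum hA hk1 hkA hP, sum_range_product_eq_sum_depthPairs hP L,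
    ← sum_depthPairs_eq_npairs A P L hL1]
  · refine sum_congr rfl fun x hx => card_pairs_at_dist_eq hA ?_
    simp only [depthPairs, mem_sigma, mem_Icc] at hx
    omega
  · intro d₁ d₂ hne
    obtain ⟨e, he⟩ := card_pos.1 (Nat.pos_of_ne_zero hne)
    have hlca := @lcaDepth_le A d₁ e.1 d₂ e.2
    exact ⟨_, hlca, by simp only [mem_filter] at he; omega⟩

/-- **Lemma 2 (pair-counting in a `P`-generation subtree).**
In the subgraph of the tree growing at exponential rate `A` induced by the node set `V(j,k,P)`,
the number of (ordered) pairs `(v,w)` of nodes which are separated by exactly `L` edges,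
`1 ≤ L ≤ 2(P−1)`, is given by the sum `N(P,L)` (= `npairs A P L`). -/
theorem stmt5 (A : ℕ) (hA : 1 ≤ A) (j k P : ℕ) (hk1 : 1 ≤ k) (hkA : k ≤ A ^ j)
    (hP : 1 ≤ P) (L : ℕ) (hL1 : 1 ≤ L) (hL2 : L ≤ 2 * (P - 1)) :
    Nat.card {p : TreeNode A × TreeNode A //
        p.1 ∈ subtreeNodes A j k P ∧ p.2 ∈ subtreeNodes A j k P ∧
        (expTree A).edist p.1 p.2 = (L : ℕ∞)} = npairs A P L :=
  stmt5_general A hA j k P hk1 hkA hP L hL1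
end

section
/- There is a constant 0 < C < ∞, not depending on P, L and A, such that for all A ∈ ℕ₊, P ∈ ℕ₊ and 1 ≤ L ≤ 2(P−1), N(P,L) ≤ C · P · A^{P + L/2}, where N(P,L) = Σ_{h=0}^{⌊P−1−L/2⌋} A^h Σ_{i = max(1, L−(P−1−h))}^{min(L, P−1−h)} A^i (2·1{L=i} + (A−1)A^{L−i−1}·1{L>i}). -/
open MeasureTheory ProbabilityTheory Filter
open scoped ENNReal NNReal

/-!
For `i < L` the summand `A^i (A-1) A^(L-i-1)` equals `(A-1) A^(L-1)`, so each inner sum is at most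
`(2 + L(A-1)) A^L`. Over the `n = P - ⌈L/2⌉` values of `h`, the factor `A - 1` is absorbed by the
geometric sum, `(A-1) ∑_{h<n} A^h ≤ A^n`, while `2 ∑_{h<n} A^h ≤ 2n A^n`. Hence
`N(P,L) ≤ (2n + L) A^(n+L) ≤ 2P A^(P + ⌊L/2⌋)`, and `C = 2` works.
-/

lemma npairs_inner_sum_le {A : ℕ} (hA : 1 ≤ A) (L : ℕ) (s : Finset ℕ) :
    ∑ i ∈ s, A ^ i * (2 * (if L = i then 1 else 0) +
        (A - 1) * A ^ (L - i - 1) * (if i < L then 1 else 0))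
      ≤ (2 + L * (A - 1)) * A ^ L := by
  have hterm : ∀ i, A ^ i * (2 * (if L = i then 1 else 0) +
        (A - 1) * A ^ (L - i - 1) * (if i < L then 1 else 0))
      = (if L = i then 2 * A ^ L else 0) + (if i < L then (A - 1) * A ^ (L - 1) else 0) := by
    intro i
    split_ifs with hLi hiL hiL
    · omega
    · subst hLi; ring
    · rw [show L - 1 = i + (L - i - 1) by omega, pow_add]; ring
    · simp
  have hdiag : ∑ i ∈ s, (if L = i then 2 * A ^ L else 0) ≤ 2 * A ^ L := by
    rw [Finset.sum_ite_eq]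
    split_ifs <;> simp
  have hbelow : ∑ i ∈ s, (if i < L then (A - 1) * A ^ (L - 1) else 0) ≤ L * ((A - 1) * A ^ L) :=
    calc ∑ i ∈ s, (if i < L then (A - 1) * A ^ (L - 1) else 0)
        = (s.filter (· < L)).card * ((A - 1) * A ^ (L - 1)) := by
          rw [← Finset.sum_filter, Finset.sum_const, smul_eq_mul]
      _ ≤ L * ((A - 1) * A ^ L) := by
          gcongr
          · simpa using Finset.card_le_card (s := s.filter (· < L)) (t := Finset.range L)
              (fun i hi => by simp_all)
          · omega
  rw [Finset.sum_congr rfl fun i _ => hterm i, Finset.sum_add_distrib]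
  calc _ ≤ 2 * A ^ L + L * ((A - 1) * A ^ L) := add_le_add hdiag hbelow
    _ = (2 + L * (A - 1)) * A ^ L := by ring

lemma add_mul_sub_one_mul_geom_sum_le {A : ℕ} (hA : 1 ≤ A) (c L n : ℕ) :
    (c + L * (A - 1)) * ∑ h ∈ Finset.range n, A ^ h ≤ (c * n + L) * A ^ n := by
  have hsum : ∑ h ∈ Finset.range n, A ^ h ≤ n * A ^ n := by
    simpa using Finset.sum_le_sum fun h (hh : h ∈ Finset.range n) =>
      Nat.pow_le_pow_right hA (Finset.mem_range.1 hh).le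
  have hgeom : (∑ h ∈ Finset.range n, A ^ h) * (A - 1) ≤ A ^ n := by
    rw [geom_sum_mul_of_one_le hA]
    exact Nat.sub_le _ _
  calc (c + L * (A - 1)) * ∑ h ∈ Finset.range n, A ^ h
      = c * ∑ h ∈ Finset.range n, A ^ h + L * ((∑ h ∈ Finset.range n, A ^ h) * (A - 1)) := by
        ring
    _ ≤ c * (n * A ^ n) + L * A ^ n := by gcongr
    _ = (c * n + L) * A ^ n := by ring

lemma npairs_le {A P L : ℕ} (hA : 1 ≤ A) (hP : 1 ≤ P) (hLP : L ≤ 2 * (P - 1)) :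
    npairs A P L ≤ 2 * P * A ^ (P + L / 2) := by
  set n := P - 1 - (L + 1) / 2 + 1
  calc npairs A P L
      ≤ ∑ h ∈ Finset.range n, A ^ h * ((2 + L * (A - 1)) * A ^ L) :=
        Finset.sum_le_sum fun h _ => Nat.mul_le_mul_left _ (npairs_inner_sum_le hA L _)
    _ = (2 + L * (A - 1)) * (∑ h ∈ Finset.range n, A ^ h) * A ^ L := by
        rw [Finset.mul_sum, Finset.sum_mul]
        exact Finset.sum_congr rfl fun h _ => by ring
    _ ≤ (2 * n + L) * A ^ n * A ^ L := Nat.mul_le_mul_right _ (add_mul_sub_one_mul_geom_sum_le hA 2 L n)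
    _ ≤ 2 * P * A ^ (P + L / 2) := by
        rw [mul_assoc, ← pow_add, show n + L = P + L / 2 by omega]
        gcongr
        omega

/-- **Uniform bound `N(P,L) ≤ C·P·A^{P+L/2}`.**
There is a constant `0 < C < ∞`, not depending on `P`, `L` and `A`, such that
`N(P,L) ≤ C · P · A^{P+L/2}` for all `A, P ∈ ℕ₊` and `1 ≤ L ≤ 2(P−1)`. -/
theorem stmt7 :
    ∃ C : ℝ, 0 < C ∧ ∀ A P L : ℕ, 1 ≤ A → 1 ≤ P → 1 ≤ L → L ≤ 2 * (P - 1) →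
      (npairs A P L : ℝ) ≤ C * (P : ℝ) * (A : ℝ) ^ ((P : ℝ) + (L : ℝ) / 2) := by
  refine ⟨2, two_pos, fun A P L hA hP _ hLP => ?_⟩
  have hexp : ((P + L / 2 : ℕ) : ℝ) ≤ (P : ℝ) + (L : ℝ) / 2 := by
    push_cast
    exact add_le_add_right Nat.cast_div_le _
  calc (npairs A P L : ℝ) ≤ 2 * (P : ℝ) * (A : ℝ) ^ (P + L / 2) := by
        exact_mod_cast npairs_le hA hP hLP
    _ ≤ 2 * (P : ℝ) * (A : ℝ) ^ ((P : ℝ) + (L : ℝ) / 2) := by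
        gcongr
        rw [← Real.rpow_natCast]
        exact Real.rpow_le_rpow_of_exponent_le (by exact_mod_cast hA) hexp
end

section
/- Let G = (V, E' ∪ Ẽ) be a graph growing at exponential rate A with underlying tree T = (V,E'), and suppose S := sup{ d_T(v,w) : (v,w) ∈ Ẽ } < ∞ with S ≥ 1. Then for all nodes v ≠ w in V: max(1, d_T(v,w)/S) ≤ d_G(v,w) ≤ d_T(v,w). Consequently, for any random field {Z_v : v ∈ V} the α-mixing coefficients satisfy α_T(⌈S·n⌉) ≤ α_G(n) ≤ α_T(n) for all n ∈ ℕ; in particular, strong mixing w.r.t. G implies strong mixing w.r.t. T and vice versa. -/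
open MeasureTheory ProbabilityTheory Filter
open scoped ENNReal NNReal

/-!
Every edge of `G` spans at most `S` tree edges, so concatenating tree geodesics along a `G`-geodesic
gives `d_T ≤ S · d_G`, while `T ≤ G` gives `d_G ≤ d_T`. Hence `d_T(I, J) ≥ S n` forces
`d_G(I, J) ≥ n`, and `d_G(I, J) ≥ n` forces `d_T(I, J) ≥ n`: the suprema defining the mixing
coefficients are taken over nested families of pairs `(I, J)`. Mixing w.r.t. `T` then transfers to
`G` by the upper bound, and back by the lower bound together with the monotonicity of `α_T`.
-/

open SimpleGraph

lemma Real.iSup_prop_mono {p q : Prop} {x : ℝ} (hx : 0 ≤ x) (hpq : p → q) :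
    ⨆ _ : p, x ≤ ⨆ _ : q, x :=
  Real.iSup_le (fun hp => (ciSup_pos (f := fun _ => x) (hpq hp)).ge)
    (Real.iSup_nonneg fun _ => hx)

lemma Antitone.tendsto_zero_of_comp_mul_le {f g : ℕ → ℝ} {S : ℕ} (hS : S ≠ 0) (hf : Antitone f)
    (hf0 : ∀ n, 0 ≤ f n) (hfg : ∀ n, f (S * n) ≤ g n) (hg : Tendsto g atTop (nhds 0)) :
    Tendsto f atTop (nhds 0) :=
  squeeze_zero hf0 (fun m => (hf (Nat.mul_div_le m S)).trans (hfg (m / S)))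
    (hg.comp (Nat.tendsto_div_const_atTop hS))

section AlphaMix

variable {Ω : Type*} [MeasurableSpace Ω] (μ : Measure Ω)
  {V : Type*} (Z : V → Ω → ℝ)

lemma abs_toReal_measure_inter_sub_mul_le_one [IsProbabilityMeasure μ] (s t : Set Ω) :
    |(μ (s ∩ t)).toReal - (μ s).toReal * (μ t).toReal| ≤ 1 :=
  abs_sub_le_of_nonneg_of_le ENNReal.toReal_nonneg measureReal_le_one
    (mul_nonneg ENNReal.toReal_nonneg ENNReal.toReal_nonneg)
    (mul_le_one₀ measureReal_le_one ENNReal.toReal_nonneg measureReal_le_one)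

noncomputable def alphaDep (I J : Set V) : ℝ :=
  ⨆ A : Set Ω, ⨆ (_ : MeasurableSet[⨆ v ∈ I, MeasurableSpace.comap (Z v) inferInstance] A),
  ⨆ B : Set Ω, ⨆ (_ : MeasurableSet[⨆ w ∈ J, MeasurableSpace.comap (Z w) inferInstance] B),
    |(μ (A ∩ B)).toReal - (μ A).toReal * (μ B).toReal|

lemma alphaDep_nonneg (I J : Set V) : 0 ≤ alphaDep μ Z I J :=
  Real.iSup_nonneg fun _ => Real.iSup_nonneg fun _ => Real.iSup_nonneg fun _ =>
    Real.iSup_nonneg fun _ => abs_nonneg _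

lemma alphaDep_le_one [IsProbabilityMeasure μ] (I J : Set V) : alphaDep μ Z I J ≤ 1 :=
  Real.iSup_le (fun _ => Real.iSup_le (fun _ => Real.iSup_le (fun _ =>
    Real.iSup_le (fun _ => abs_toReal_measure_inter_sub_mul_le_one μ _ _) zero_le_one)
      zero_le_one) zero_le_one) zero_le_one

lemma alphaMix_eq_iSup_alphaDep (ed : V → V → ℕ∞) (n : ℕ) :
    alphaMix μ ed Z n =
      ⨆ I : Set V, ⨆ J : Set V, ⨆ (_ : ∀ v ∈ I, ∀ w ∈ J, (n : ℕ∞) ≤ ed v w),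
        alphaDep μ Z I J :=
  rfl

lemma alphaMix_nonneg (ed : V → V → ℕ∞) (n : ℕ) : 0 ≤ alphaMix μ ed Z n :=
  Real.iSup_nonneg fun _ => Real.iSup_nonneg fun _ => Real.iSup_nonneg fun _ =>
    alphaDep_nonneg μ Z _ _

lemma alphaMix_le_alphaMix [IsProbabilityMeasure μ] {ed ed' : V → V → ℕ∞} {n n' : ℕ}
    (h : ∀ v w, (n : ℕ∞) ≤ ed v w → (n' : ℕ∞) ≤ ed' v w) :
    alphaMix μ ed Z n ≤ alphaMix μ ed' Z n' := by
  simp only [alphaMix_eq_iSup_alphaDep]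
  have hle_one : ∀ I J, ⨆ (_ : ∀ v ∈ I, ∀ w ∈ J, (n' : ℕ∞) ≤ ed' v w), alphaDep μ Z I J ≤ 1 :=
    fun I J => Real.iSup_le (fun _ => alphaDep_le_one μ Z I J) zero_le_one
  refine ciSup_mono ⟨1, ?_⟩ fun I => ciSup_mono ⟨1, ?_⟩ fun J =>
    Real.iSup_prop_mono (alphaDep_nonneg μ Z I J) fun hIJ v hv w hw => h v w (hIJ v hv w hw)
  · rintro _ ⟨I, rfl⟩
    exact Real.iSup_le (hle_one I) zero_le_one
  · rintro _ ⟨J, rfl⟩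
    exact hle_one I J

lemma alphaMix_antitone [IsProbabilityMeasure μ] (ed : V → V → ℕ∞) :
    Antitone (alphaMix μ ed Z) :=
  fun _ _ hnm => alphaMix_le_alphaMix μ Z fun _ _ h => (Nat.cast_le.mpr hnm).trans h

end AlphaMix

section Metric

variable {V : Type*} {T G : SimpleGraph V}

lemma SimpleGraph.Walk.edist_le_mul_length {S : ℕ∞} (hS : ∀ v w, G.Adj v w → T.edist v w ≤ S)
    {u v : V} (p : G.Walk u v) : T.edist u v ≤ S * p.length := by
  induction p with
  | nil => simp
  | @cons a b c hab q ih =>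
    calc T.edist a c ≤ T.edist a b + T.edist b c := SimpleGraph.edist_triangle
      _ ≤ S + S * q.length := add_le_add (hS a b hab) ih
      _ = S * (q.cons hab).length := by rw [Walk.length_cons]; push_cast; ring

lemma SimpleGraph.edist_le_mul_edist {S : ℕ∞} (hS0 : S ≠ 0)
    (hS : ∀ v w, G.Adj v w → T.edist v w ≤ S) (v w : V) : T.edist v w ≤ S * G.edist v w := by
  by_cases hvw : G.edist v w = ⊤
  · simp [hvw, ENat.mul_top hS0]
  · obtain ⟨p, hp⟩ := exists_walk_of_edist_ne_top hvw
    exact hp ▸ p.edist_le_mul_length hS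

lemma SimpleGraph.le_edist_of_mul_le_edist {S n : ℕ} (hS0 : S ≠ 0)
    (hS : ∀ v w, G.Adj v w → T.edist v w ≤ S) {v w : V} (h : ((S * n : ℕ) : ℕ∞) ≤ T.edist v w) :
    (n : ℕ∞) ≤ G.edist v w := by
  have hle := h.trans (edist_le_mul_edist (Nat.cast_ne_zero.mpr hS0) hS v w)
  push_cast at hle
  exact (ENat.mul_le_mul_left_iff (Nat.cast_ne_zero.mpr hS0) (ENat.natCast_ne_top S)).mp hle

end Metric

theorem stmt14_general {Ω : Type*} [MeasurableSpace Ω] (μ : Measure Ω) [IsProbabilityMeasure μ]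
    (A : ℕ)
    (G : SimpleGraph (TreeNode A)) (hTG : expTree A ≤ G)
    (S : ℕ) (hS1 : 1 ≤ S)
    (hS : ∀ v w : TreeNode A, G.Adj v w → (expTree A).edist v w ≤ (S : ℕ∞))
    (Z : TreeNode A → Ω → ℝ) :
    (∀ v w : TreeNode A, v ≠ w →
      (1 : ℕ∞) ≤ G.edist v w ∧
      (expTree A).edist v w ≤ (S : ℕ∞) * G.edist v w ∧
      G.edist v w ≤ (expTree A).edist v w) ∧
    (∀ n : ℕ,
      alphaMix μ (expTree A).edist Z (S * n) ≤ alphaMix μ G.edist Z n ∧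
      alphaMix μ G.edist Z n ≤ alphaMix μ (expTree A).edist Z n) ∧
    (Tendsto (alphaMix μ G.edist Z) atTop (nhds 0) ↔
      Tendsto (alphaMix μ (expTree A).edist Z) atTop (nhds 0)) := by
  have hS0 : S ≠ 0 := Nat.one_le_iff_ne_zero.mp hS1
  have hGT : ∀ v w, G.edist v w ≤ (expTree A).edist v w := fun _ _ => edist_anti hTG
  have hα : ∀ n : ℕ,
      alphaMix μ (expTree A).edist Z (S * n) ≤ alphaMix μ G.edist Z n ∧
      alphaMix μ G.edist Z n ≤ alphaMix μ (expTree A).edist Z n := fun n =>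
    ⟨alphaMix_le_alphaMix μ Z fun _ _ => le_edist_of_mul_le_edist hS0 hS,
      alphaMix_le_alphaMix μ Z fun v w h => h.trans (hGT v w)⟩
  refine ⟨fun v w hvw => ⟨Order.one_le_iff_pos.mpr (edist_pos_of_ne hvw),
    edist_le_mul_edist (Nat.cast_ne_zero.mpr hS0) hS v w, hGT v w⟩,
    hα, ⟨fun hG => ?_, fun hT => ?_⟩⟩
  · exact (alphaMix_antitone μ Z _).tendsto_zero_of_comp_mul_le hS0 (alphaMix_nonneg μ Z _)
      (fun n => (hα n).1) hG
  · exact squeeze_zero (alphaMix_nonneg μ Z _) (fun n => (hα n).2) hT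

/-- **Comparison of the tree metric and the graph metric, and of the mixing coefficients.**
If `G = (V, E' ∪ Ẽ)` grows at exponential rate `A` with underlying tree `T = (V,E')` and
`d_T(v,w) ≤ S` for every edge `(v,w)` of `G`, `S ≥ 1`, then for all `v ≠ w`:
`max(1, d_T(v,w)/S) ≤ d_G(v,w) ≤ d_T(v,w)`.  Consequently, for any random field `{Z_v}` the
α-mixing coefficients satisfy `α_T(⌈S·n⌉) ≤ α_G(n) ≤ α_T(n)` for all `n`; in particular,
strong mixing w.r.t. `G` holds iff strong mixing w.r.t. `T` holds. -/
theorem stmt14 {Ω : Type*} [MeasurableSpace Ω] (μ : Measure Ω) [IsProbabilityMeasure μ]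
    (A : ℕ) (hA : 1 ≤ A)
    (G : SimpleGraph (TreeNode A)) (hTG : expTree A ≤ G)
    (S : ℕ) (hS1 : 1 ≤ S)
    (hS : ∀ v w : TreeNode A, G.Adj v w → (expTree A).edist v w ≤ (S : ℕ∞))
    (Z : TreeNode A → Ω → ℝ) :
    (∀ v w : TreeNode A, v ≠ w →
      (1 : ℕ∞) ≤ G.edist v w ∧
      (expTree A).edist v w ≤ (S : ℕ∞) * G.edist v w ∧
      G.edist v w ≤ (expTree A).edist v w) ∧
    (∀ n : ℕ,
      alphaMix μ (expTree A).edist Z (S * n) ≤ alphaMix μ G.edist Z n ∧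
      alphaMix μ G.edist Z n ≤ alphaMix μ (expTree A).edist Z n) ∧
    (Tendsto (alphaMix μ G.edist Z) atTop (nhds 0) ↔
      Tendsto (alphaMix μ (expTree A).edist Z) atTop (nhds 0)) :=
  stmt14_general μ A G hTG S hS1 hS Z
end

section
/- Let T = (V,E) be the tree growing at exponential rate A with A ≥ 2, let L ∈ ℕ and P₂, Q₂ ∈ ℕ₊ with Q₂ ≤ P₂ and P₂ + Q₂ < A^L, and let f = 2·⌈log Q₂ / log A⌉. Partition the indices {1,…,A^L} into consecutive blocks of lengths P₂ and Q₂ alternately, and for P ∈ ℕ₊ set A(i) = V(L,(i−1)(P₂+Q₂)+1,P) ∪ … ∪ V(L,(i−1)Q₂+iP₂,P) for i = 1,…,T' with T' = ⌈A^L/(P₂+Q₂)⌉ (intersected with valid indices). Then for any i ≠ i', the graph distance between the node sets A(i) and A(i') satisfies d_T(A(i), A(i')) ≥ 2⌈log Q₂ / log A⌉ = f. -/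
open MeasureTheory ProbabilityTheory Filter
open scoped ENNReal NNReal

/-- The `i`-th big block `A(i) = V(L,(i−1)(P₂+Q₂)+1,P) ∪ … ∪ V(L,(i−1)Q₂+iP₂,P)`
(only root indices `m ≤ A^L` being valid). -/
def blockSet (A L P P₂ Q₂ i : ℕ) : Set (TreeNode A) :=
  ⋃ m ∈ {m : ℕ | (i - 1) * (P₂ + Q₂) + 1 ≤ m ∧ m ≤ (i - 1) * Q₂ + i * P₂ ∧ m ≤ A ^ L},
    subtreeNodes A L m P

/-!
Write `g = ⌈log Q₂ / log A⌉₊ = Nat.clog A Q₂`, so `A^(g-1) < Q₂`. Between a root of a subtree in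
block `i < i'` and one in block `i'` there lie the `Q₂` roots of a separating gap, so the two roots
have different ancestors at level `L - (g-1)`. A walk that never leaves the levels `≥ L - (g-1)`
keeps the ancestor at that level fixed, hence every walk from `A(i)` to `A(i')` descends from
level `≥ L` to below `L - (g-1)` and climbs back up: it has at least `2g` edges.
-/

open SimpleGraph

theorem Nat.sub_one_div_eq_sub_one {n m k : ℕ} (h₁ : n * (m - 1) + 1 ≤ k) (h₂ : k ≤ n * m) :
    (k - 1) / n = m - 1 := by
  have hm : 1 ≤ m := by
    by_contra! h
    simp_all
  apply Nat.div_eq_of_lt_le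
  · rw [Nat.mul_comm]
    omega
  · rw [Nat.sub_add_cancel hm, Nat.mul_comm]
    omega

namespace TreeNode

variable {A : ℕ}

/-- The zero-based index of the ancestor of `v` at level `ℓ ≤ v.1.1`. -/
def ancestorIndex (ℓ : ℕ) (v : TreeNode A) : ℕ :=
  (v.1.2 - 1) / A ^ (v.1.1 - ℓ)

theorem level_le_level_add_length {x y : TreeNode A} (p : (expTree A).Walk x y) :
    x.1.1 ≤ y.1.1 + p.length := by
  induction p with
  | nil => simp
  | cons h p ih =>
    rw [Walk.length_cons]
    rcases (h : _ ∨ _) with ⟨h, -⟩ | ⟨h, -⟩ <;> omega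

theorem ancestorIndex_of_child {ℓ : ℕ} {a b : TreeNode A} (hℓ : ℓ ≤ a.1.1)
    (hb : b.1.1 = a.1.1 + 1) (h₁ : A * (a.1.2 - 1) + 1 ≤ b.1.2) (h₂ : b.1.2 ≤ A * a.1.2) :
    ancestorIndex ℓ b = ancestorIndex ℓ a := by
  have hlevel : b.1.1 - ℓ = a.1.1 - ℓ + 1 := by omega
  rw [ancestorIndex, ancestorIndex, hlevel, pow_succ', ← Nat.div_div_eq_div_mul,
    Nat.sub_one_div_eq_sub_one h₁ h₂]

theorem ancestorIndex_eq_of_adj {ℓ : ℕ} {u u' : TreeNode A} (h : (expTree A).Adj u u')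
    (hu : ℓ ≤ u.1.1) (hu' : ℓ ≤ u'.1.1) : ancestorIndex ℓ u = ancestorIndex ℓ u' := by
  rcases (h : _ ∨ _) with ⟨h₀, h₁, h₂⟩ | ⟨h₀, h₁, h₂⟩
  · exact (ancestorIndex_of_child hu h₀ h₁ h₂).symm
  · exact ancestorIndex_of_child hu' h₀ h₁ h₂

theorem ancestorIndex_eq_of_walk {ℓ : ℕ} {x y : TreeNode A} (p : (expTree A).Walk x y)
    (hp : ∀ u ∈ p.support, ℓ ≤ u.1.1) : ancestorIndex ℓ x = ancestorIndex ℓ y := by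
  induction p with
  | nil => rfl
  | cons h p ih =>
    rw [Walk.support_cons, List.forall_mem_cons] at hp
    rw [ancestorIndex_eq_of_adj h hp.1 (hp.2 _ p.start_mem_support)]
    exact ih hp.2

theorem add_le_edist_of_ancestorIndex_ne {ℓ : ℕ} {v w : TreeNode A}
    (h : ancestorIndex ℓ v ≠ ancestorIndex ℓ w) :
    ((v.1.1 + 1 - ℓ + (w.1.1 + 1 - ℓ) : ℕ) : ℕ∞) ≤ (expTree A).edist v w := by
  classical
  refine le_sInf ?_
  rintro _ ⟨p, rfl⟩
  obtain ⟨u, hu, hlow⟩ : ∃ u ∈ p.support, u.1.1 < ℓ := by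
    by_contra! hp
    exact h (ancestorIndex_eq_of_walk p hp)
  have hsplit := congrArg Walk.length (p.take_spec hu)
  rw [Walk.length_append] at hsplit
  have hdown := level_le_level_add_length (p.takeUntil u hu)
  have hup := level_le_level_add_length (p.dropUntil u hu).reverse
  rw [Walk.length_reverse] at hup
  exact Nat.cast_le.mpr (by omega)

theorem ancestorIndex_of_mem_subtreeNodes {L m P ℓ : ℕ} {v : TreeNode A}
    (hv : v ∈ subtreeNodes A L m P) (hℓ : ℓ ≤ L) :
    ancestorIndex ℓ v = (m - 1) / A ^ (L - ℓ) := by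
  obtain ⟨hL, -, h₁, h₂⟩ := hv
  have hpow : A ^ (v.1.1 - ℓ) = A ^ (v.1.1 - L) * A ^ (L - ℓ) := by
    rw [← pow_add]
    congr 1
    omega
  rw [ancestorIndex, hpow, ← Nat.div_div_eq_div_mul, Nat.sub_one_div_eq_sub_one h₁ h₂]

theorem two_mul_succ_le_edist_of_mem_subtreeNodes {L m m' P P' d : ℕ} {v w : TreeNode A}
    (hA : 0 < A) (hd : d ≤ L) (hmm' : m + A ^ d ≤ m')
    (hv : v ∈ subtreeNodes A L m P) (hw : w ∈ subtreeNodes A L m' P') :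
    ((2 * (d + 1) : ℕ) : ℕ∞) ≤ (expTree A).edist v w := by
  have hm : 1 ≤ m := by
    by_contra! h
    obtain ⟨-, -, h₁, h₂⟩ := hv
    simp_all
  have hne : ancestorIndex (L - d) v ≠ ancestorIndex (L - d) w := by
    rw [ancestorIndex_of_mem_subtreeNodes hv (Nat.sub_le L d),
      ancestorIndex_of_mem_subtreeNodes hw (Nat.sub_le L d), Nat.sub_sub_self hd]
    refine (Nat.lt_of_lt_of_le ?_ (Nat.div_le_div_right (c := A ^ d)
      (show m - 1 + A ^ d ≤ m' - 1 by omega))).ne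
    rw [Nat.add_div_right _ (Nat.pow_pos hA)]
    exact Nat.lt_succ_self _
  refine le_trans ?_ (add_le_edist_of_ancestorIndex_ne hne)
  have hvL := hv.1
  have hwL := hw.1
  norm_cast
  omega

end TreeNode

open TreeNode

theorem add_lt_of_mem_block_of_lt {P₂ Q₂ i i' m m' : ℕ} (hii : i < i')
    (hm₁ : (i - 1) * (P₂ + Q₂) + 1 ≤ m) (hm₂ : m ≤ (i - 1) * Q₂ + i * P₂)
    (hm' : (i' - 1) * (P₂ + Q₂) + 1 ≤ m') : m + Q₂ < m' := by
  obtain _ | j := i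
  · omega
  have hblock : (j + 1) * (P₂ + Q₂) ≤ (i' - 1) * (P₂ + Q₂) :=
    Nat.mul_le_mul_right _ (by omega)
  have hsplit : (j + 1) * (P₂ + Q₂) = j * Q₂ + (j + 1) * P₂ + Q₂ := by ring
  rw [Nat.add_sub_cancel] at hm₂
  omega

theorem two_mul_clog_le_edist_of_lt {A L P P₂ Q₂ i i' : ℕ} {v w : TreeNode A} (hii : i < i')
    (hv : v ∈ blockSet A L P P₂ Q₂ i) (hw : w ∈ blockSet A L P P₂ Q₂ i') :
    ((2 * Nat.clog A Q₂ : ℕ) : ℕ∞) ≤ (expTree A).edist v w := by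
  simp only [blockSet, Set.mem_iUnion, exists_prop] at hv hw
  obtain ⟨m, ⟨hm₁, hm₂, -⟩, hvm⟩ := hv
  obtain ⟨m', ⟨hm'₁, -, hm'L⟩, hwm'⟩ := hw
  obtain hg | hg := (Nat.clog A Q₂).eq_zero_or_pos
  · simp [hg]
  have hA : 0 < A := Nat.pos_of_ne_zero fun h => by simp [h] at hg
  have hsep := add_lt_of_mem_block_of_lt hii hm₁ hm₂ hm'₁
  have hpow : A ^ (Nat.clog A Q₂ - 1) < Q₂ := Nat.pow_lt_of_lt_clog (by omega)
  have hgL : Nat.clog A Q₂ ≤ L := Nat.clog_le_of_le_pow (by omega)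
  have := two_mul_succ_le_edist_of_mem_subtreeNodes hA (d := Nat.clog A Q₂ - 1) (by omega)
    (by omega) hvm hwm'
  rwa [Nat.sub_add_cancel hg] at this

theorem stmt19_general (A : ℕ) (L P P₂ Q₂ : ℕ)
    (i i' : ℕ)
    (hii : i ≠ i')
    (v w : TreeNode A)
    (hv : v ∈ blockSet A L P P₂ Q₂ i) (hw : w ∈ blockSet A L P P₂ Q₂ i') :
    ((2 * ⌈Real.log Q₂ / Real.log A⌉₊ : ℕ) : ℕ∞) ≤ (expTree A).edist v w := by
  rw [show ⌈Real.log Q₂ / Real.log A⌉₊ = Nat.clog A Q₂ from Real.natCeil_logb_natCast A Q₂]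
  rcases hii.lt_or_gt with h | h
  · exact two_mul_clog_le_edist_of_lt h hv hw
  · rw [edist_comm]
    exact two_mul_clog_le_edist_of_lt h hw hv

/-- **Separation of the blocks.**
In the tree growing at exponential rate `A ≥ 2`, distinct blocks `A(i)`, `A(i')` of subtrees
(with alternating block lengths `P₂` and `Q₂`, `Q₂ ≤ P₂`, `P₂ + Q₂ < A^L`) are at graph
distance at least `f = 2⌈log Q₂ / log A⌉` from each other. -/
theorem stmt19 (A : ℕ) (hA : 2 ≤ A) (L P P₂ Q₂ : ℕ) (hP : 1 ≤ P)
    (hP₂ : 1 ≤ P₂) (hQ₂ : 1 ≤ Q₂) (hQP : Q₂ ≤ P₂) (hPQ : P₂ + Q₂ < A ^ L)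
    (i i' : ℕ) (hi : 1 ≤ i) (hi' : 1 ≤ i')
    (hiT : i ≤ (A ^ L + (P₂ + Q₂) - 1) / (P₂ + Q₂))
    (hiT' : i' ≤ (A ^ L + (P₂ + Q₂) - 1) / (P₂ + Q₂))
    (hii : i ≠ i')
    (v w : TreeNode A)
    (hv : v ∈ blockSet A L P P₂ Q₂ i) (hw : w ∈ blockSet A L P P₂ Q₂ i') :
    ((2 * ⌈Real.log Q₂ / Real.log A⌉₊ : ℕ) : ℕ∞) ≤ (expTree A).edist v w :=
  stmt19_general A L P P₂ Q₂ i i' hii v w hv hw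
end
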